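/- Let p > 1, h ≥ 0, and t₁ < t₂. Suppose Z : [t₁,t₂] × [0,1] → ℝ is twice continuously differentiable, satisfies Z(t,0) = Z(t,1) = 0 for all t ∈ [t₁,t₂], and solves ∂_t Z = ∂²_{xx} Z + Z|Z|^{p-1} − h|Z|^{p-1} − h on [t₁,t₂] × [0,1]. Define φ(t) = ∫₀¹ Z(t,x)² dx. Then for every t₀ ∈ (t₁,t₂): φ'(t₀) ≥ −4 S^{(h)}(Z(t₀,·)) + 2 ∫₀¹ ( ((p-1)/(p+1)) |Z(t₀,x)|^{p+1} − h ((p+2)/p) |Z(t₀,x)|^{p} − h |Z(t₀,x)| ) dx. -/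

import Mathlib

/-!
Differentiating under the integral sign and inserting the equation gives
`φ'(t₀) = 2∫ Z ∂ₜZ = −2∫ (∂ₓZ)² + 2∫ Z (Z|Z|^{p−1} − h|Z|^{p−1} − h)`,
the boundary terms of the integration by parts vanishing by the Dirichlet condition.
Against `−4 S⁽ʰ⁾` the gradient terms cancel exactly, the `|Z|^{p+1}` terms cancel because
`4/(p+1) + 2(p−1)/(p+1) = 2`, and the pointwise gap is
`2h(Z + |Z|)(|Z|^{p−1} + 1) + (4h/p)|Z|^p ≥ 0`.
-/

open Set

/-- The modified potential
`S⁽ʰ⁾(v) = ∫₀¹ ((1/2) v'² − |v|^{p+1}/(p+1) + h v|v|^{p-1} + h v)`. -/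
noncomputable def potSh (p h : ℝ) (v : ℝ → ℝ) : ℝ :=
  ∫ x in (0:ℝ)..1, ((1/2) * (deriv v x) ^ 2 - |v x| ^ (p + 1) / (p + 1)
    + h * (v x * |v x| ^ (p - 1)) + h * v x)

theorem hasDerivAt_intervalIntegral_of_contDiff {E : Type*} [NormedAddCommGroup E]
    [NormedSpace ℝ E] [CompleteSpace E] {F : ℝ → ℝ → E}
    (hF : ContDiff ℝ 1 (fun q : ℝ × ℝ => F q.1 q.2)) (a b t₀ : ℝ) :
    HasDerivAt (fun t => ∫ x in a..b, F t x)
      (∫ x in a..b, deriv (fun s => F s x) t₀) t₀ := by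
  set G : ℝ × ℝ → E := fun q => F q.1 q.2
  have hG : Differentiable ℝ G := hF.differentiable one_ne_zero
  have hasDerivAt_left (t x : ℝ) :
      HasDerivAt (fun s => F s x) (fderiv ℝ G (t, x) (1, 0)) t := by
    exact (hG (t, x)).hasFDerivAt.comp_hasDerivAt t
      ((hasDerivAt_id t).prodMk (hasDerivAt_const t x))
  have hcont : Continuous fun q : ℝ × ℝ => fderiv ℝ G q (1, 0) :=
    (hF.continuous_fderiv one_ne_zero).clm_apply continuous_const
  obtain ⟨C, hC⟩ := ((isCompact_Icc (a := t₀ - 1) (b := t₀ + 1)).prod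
    (isCompact_uIcc (a := a) (b := b))).exists_bound_of_continuousOn hcont.continuousOn
  have hFx (t : ℝ) : Continuous (F t) := hF.continuous.comp (Continuous.prodMk_right t)
  have key := intervalIntegral.hasDerivAt_integral_of_dominated_loc_of_deriv_le
    (μ := MeasureTheory.volume) (F' := fun t x => fderiv ℝ G (t, x) (1, 0))
    (bound := fun _ => C)
    (Metric.ball_mem_nhds t₀ one_pos)
    (Filter.Eventually.of_forall fun t => (hFx t).aestronglyMeasurable)
    ((hFx t₀).intervalIntegrable a b)
    (hcont.comp (Continuous.prodMk_right t₀)).aestronglyMeasurable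
    (Filter.Eventually.of_forall fun x hx t ht => hC (t, x)
      ⟨Ioo_subset_Icc_self (Real.ball_eq_Ioo t₀ 1 ▸ ht), uIoc_subset_uIcc hx⟩)
    intervalIntegrable_const
    (Filter.Eventually.of_forall fun x _ t _ => hasDerivAt_left t x)
  simpa only [(hasDerivAt_left _ _).deriv] using key.2

theorem integral_mul_deriv_deriv_of_eq_zero {u : ℝ → ℝ} (hu : ContDiff ℝ 2 u) {a b : ℝ}
    (ha : u a = 0) (hb : u b = 0) :
    ∫ x in a..b, u x * deriv (deriv u) x = -∫ x in a..b, deriv u x ^ 2 := by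
  have hu' : ContDiff ℝ 1 (deriv u) := hu.iterate_deriv' 1 1
  rw [intervalIntegral.integral_mul_deriv_eq_deriv_mul
      (fun x _ => (hu.differentiable (by norm_num) x).hasDerivAt)
      (fun x _ => (hu'.differentiable one_ne_zero x).hasDerivAt)
      (hu'.continuous.intervalIntegrable a b)
      ((hu'.continuous_deriv le_rfl).intervalIntegrable a b),
    ha, hb]
  simp [sq]

theorem abs_rpow_eq_abs_mul_abs_rpow_sub_one (z : ℝ) {p : ℝ} (hp : p ≠ 0) :
    |z| ^ p = |z| * |z| ^ (p - 1) := by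
  rw [← Real.rpow_one_add' (abs_nonneg z) (by simpa using hp), add_sub_cancel]

theorem abs_rpow_add_one_eq_sq_mul (z : ℝ) {p : ℝ} (hp : p + 1 ≠ 0) :
    |z| ^ (p + 1) = z ^ 2 * |z| ^ (p - 1) := by
  rw [← sq_abs, ← Real.rpow_natCast,
    ← Real.rpow_add' (abs_nonneg z) (by convert hp using 1; ring)]
  ring_nf

theorem energy_density_le {p h : ℝ} (hp : 0 < p) (hh : 0 ≤ h) (z w : ℝ) :
    -4 * ((1/2) * w ^ 2 - |z| ^ (p + 1) / (p + 1) + h * (z * |z| ^ (p - 1)) + h * z)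
        + 2 * (((p - 1) / (p + 1)) * |z| ^ (p + 1) - h * ((p + 2) / p) * |z| ^ p - h * |z|)
      ≤ -2 * w ^ 2 + 2 * (z * (z * |z| ^ (p - 1) - h * |z| ^ (p - 1) - h)) := by
  rw [abs_rpow_add_one_eq_sq_mul z (by positivity), abs_rpow_eq_abs_mul_abs_rpow_sub_one z hp.ne']
  set a := |z| ^ (p - 1)
  have ha : 0 ≤ a := by positivity
  have hz : 0 ≤ z + |z| := by linarith [neg_abs_le z]
  have hgap : -2 * w ^ 2 + 2 * (z * (z * a - h * a - h))
      - (-4 * ((1/2) * w ^ 2 - z ^ 2 * a / (p + 1) + h * (z * a) + h * z)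
        + 2 * (((p - 1) / (p + 1)) * (z ^ 2 * a) - h * ((p + 2) / p) * (|z| * a) - h * |z|))
      = 2 * h * (z + |z|) * a + 2 * h * (z + |z|) + 4 * (h / p) * (|z| * a) := by
    field_simp
    ring
  linarith [hgap, show 0 ≤ 2 * h * (z + |z|) * a + 2 * h * (z + |z|) + 4 * (h / p) * (|z| * a) by
    positivity]

theorem neg_four_mul_potSh_add_le {p h : ℝ} (hp : 1 ≤ p) (hh : 0 ≤ h) {u : ℝ → ℝ}
    (hu : ContDiff ℝ 2 u) (h0 : u 0 = 0) (h1 : u 1 = 0) :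
    -4 * potSh p h u + 2 * ∫ x in (0:ℝ)..1,
        (((p - 1) / (p + 1)) * |u x| ^ (p + 1) - h * ((p + 2) / p) * |u x| ^ p - h * |u x|)
      ≤ 2 * ∫ x in (0:ℝ)..1,
        u x * (deriv (deriv u) x + u x * |u x| ^ (p - 1) - h * |u x| ^ (p - 1) - h) := by
  have hu' : Continuous (deriv u) := (hu.iterate_deriv' 1 1).continuous
  have hu'' : Continuous (deriv (deriv u)) := (hu.iterate_deriv' 0 2).continuous
  have hpow (q : ℝ) (hq : 0 ≤ q) : Continuous fun x => |u x| ^ q :=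
    hu.continuous.abs.rpow_const fun _ => Or.inr hq
  have hpow_sub := hpow (p - 1) (by linarith)
  have hpow_p := hpow p (by linarith)
  have hpow_add := hpow (p + 1) (by linarith)
  have hu_cont := hu.continuous
  unfold potSh
  rw [← intervalIntegral.integral_const_mul, ← intervalIntegral.integral_const_mul,
    ← intervalIntegral.integral_add (by apply Continuous.intervalIntegrable; fun_prop)
      (by apply Continuous.intervalIntegrable; fun_prop)]
  calc _ ≤ ∫ x in (0:ℝ)..1,
        -2 * deriv u x ^ 2 + 2 * (u x * (u x * |u x| ^ (p - 1) - h * |u x| ^ (p - 1) - h)) :=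
      intervalIntegral.integral_mono_on zero_le_one
        (by apply Continuous.intervalIntegrable; fun_prop)
        (by apply Continuous.intervalIntegrable; fun_prop)
        fun x _ => energy_density_le (by linarith) hh (u x) (deriv u x)
    _ = 2 * ∫ x in (0:ℝ)..1, (u x * deriv (deriv u) x
          + u x * (u x * |u x| ^ (p - 1) - h * |u x| ^ (p - 1) - h)) := by
      rw [intervalIntegral.integral_add (by apply Continuous.intervalIntegrable; fun_prop)
          (by apply Continuous.intervalIntegrable; fun_prop),
        intervalIntegral.integral_add (by apply Continuous.intervalIntegrable; fun_prop)
          (by apply Continuous.intervalIntegrable; fun_prop),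
        integral_mul_deriv_deriv_of_eq_zero hu h0 h1, intervalIntegral.integral_const_mul,
        intervalIntegral.integral_const_mul]
      ring
    _ = _ := by congr 1; exact intervalIntegral.integral_congr fun x _ => by ring

theorem stmt6_general (p h t₁ t₂ : ℝ) (hp : 1 < p) (hh : 0 ≤ h)
    (Z : ℝ → ℝ → ℝ)
    (hZ : ContDiff ℝ 2 (fun q : ℝ × ℝ => Z q.1 q.2))
    (hbc : ∀ t ∈ Icc t₁ t₂, Z t 0 = 0 ∧ Z t 1 = 0)
    (hpde : ∀ t ∈ Icc t₁ t₂, ∀ x ∈ Icc (0:ℝ) 1,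
      deriv (fun s => Z s x) t =
        deriv (deriv (Z t)) x + Z t x * |Z t x| ^ (p - 1)
          - h * |Z t x| ^ (p - 1) - h) :
    ∀ t₀ ∈ Ioo t₁ t₂,
      DifferentiableAt ℝ (fun t => ∫ x in (0:ℝ)..1, (Z t x) ^ 2) t₀ ∧
      -4 * potSh p h (Z t₀) +
          2 * ∫ x in (0:ℝ)..1,
            (((p - 1) / (p + 1)) * |Z t₀ x| ^ (p + 1)
              - h * ((p + 2) / p) * |Z t₀ x| ^ p - h * |Z t₀ x|)
        ≤ deriv (fun t => ∫ x in (0:ℝ)..1, (Z t x) ^ 2) t₀ := by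
  intro t₀ ht₀
  have ht₀' : t₀ ∈ Icc t₁ t₂ := Ioo_subset_Icc_self ht₀
  have hφ := hasDerivAt_intervalIntegral_of_contDiff
    (F := fun t x => Z t x ^ 2) ((hZ.pow 2).of_le (by norm_num)) 0 1 t₀
  refine ⟨hφ.differentiableAt, ?_⟩
  rw [hφ.deriv]
  have hu : ContDiff ℝ 2 (Z t₀) := hZ.comp (contDiff_const.prodMk contDiff_id)
  calc _ ≤ _ := neg_four_mul_potSh_add_le hp.le hh hu (hbc t₀ ht₀').1 (hbc t₀ ht₀').2
    _ = _ := by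
      rw [← intervalIntegral.integral_const_mul]
      refine intervalIntegral.integral_congr fun x hx => ?_
      have hZx : DifferentiableAt ℝ (fun s => Z s x) t₀ :=
        (hZ.comp (contDiff_id.prodMk contDiff_const)).differentiable (by norm_num) t₀
      rw [deriv_fun_pow hZx, hpde t₀ ht₀' x (by simpa using hx)]
      ring

/-- Energy estimate for the comparison equation
`∂ₜZ = ∂ₓₓZ + Z|Z|^{p-1} − h|Z|^{p-1} − h`:  with `φ(t) = ∫₀¹ Z(t,x)² dx`, one has
`φ'(t₀) ≥ −4 S⁽ʰ⁾(Z(t₀,·)) + 2∫₀¹ ( ((p-1)/(p+1))|Z|^{p+1} − h((p+2)/p)|Z|^p − h|Z| )`. -/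
theorem stmt6 (p h t₁ t₂ : ℝ) (hp : 1 < p) (hh : 0 ≤ h) (ht : t₁ < t₂)
    (Z : ℝ → ℝ → ℝ)
    (hZ : ContDiff ℝ 2 (fun q : ℝ × ℝ => Z q.1 q.2))
    (hbc : ∀ t ∈ Icc t₁ t₂, Z t 0 = 0 ∧ Z t 1 = 0)
    (hpde : ∀ t ∈ Icc t₁ t₂, ∀ x ∈ Icc (0:ℝ) 1,
      deriv (fun s => Z s x) t =
        deriv (deriv (Z t)) x + Z t x * |Z t x| ^ (p - 1)
          - h * |Z t x| ^ (p - 1) - h) :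
    ∀ t₀ ∈ Ioo t₁ t₂,
      DifferentiableAt ℝ (fun t => ∫ x in (0:ℝ)..1, (Z t x) ^ 2) t₀ ∧
      -4 * potSh p h (Z t₀) +
          2 * ∫ x in (0:ℝ)..1,
            (((p - 1) / (p + 1)) * |Z t₀ x| ^ (p + 1)
              - h * ((p + 2) / p) * |Z t₀ x| ^ p - h * |Z t₀ x|)
        ≤ deriv (fun t => ∫ x in (0:ℝ)..1, (Z t x) ^ 2) t₀ :=
  stmt6_general p h t₁ t₂ hp hh Z hZ hbc hpde
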